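/- Under the hypotheses of the finite-dimensional DBO decomposition (A = UΣY^T with orthonormality and dynamical orthogonality of U and Y) and dA/dt = F with Σ invertible, the spatial basis evolves as U̇ = (I − U U^T) E[F Y] Σ^{-1}. -/

import Mathlib

/-! Differentiating `A = U Σ Yᵀ` gives `F = U̇ Σ Yᵀ + U Σ̇ Yᵀ + U Σ Ẏᵀ`. Multiplying on the right by
`W Y` (the weighted expectation against `Y`) and using `E[Yᵀ Y] = I`, `E[Ẏᵀ Y] = 0` leaves
`E[F Y] = U̇ Σ + U Σ̇`. The projector `I − U Uᵀ` kills `U Σ̇` and, because `Uᵀ U̇ = 0`, fixes `U̇ Σ`;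
it remains to cancel `Σ`. -/

open Matrix

namespace Matrix

variable {l m n p : Type*}

theorem hasDerivAt_mul_apply [Fintype m] {A : ℝ → Matrix l m ℝ} {B : ℝ → Matrix m n ℝ}
    {A' : Matrix l m ℝ} {B' : Matrix m n ℝ} {t : ℝ}
    (hA : ∀ i j, HasDerivAt (fun s => A s i j) (A' i j) t)
    (hB : ∀ j k, HasDerivAt (fun s => B s j k) (B' j k) t) (i : l) (k : n) :
    HasDerivAt (fun s => (A s * B s) i k) ((A' * B t + A t * B') i k) t := by
  simp only [mul_apply, add_apply, ← Finset.sum_add_distrib]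
  exact HasDerivAt.fun_sum fun j _ => (hA i j).mul (hB j k)

theorem hasDerivAt_mul_mul_transpose_apply [Fintype m] [Fintype n]
    {U : ℝ → Matrix l m ℝ} {S : ℝ → Matrix m n ℝ} {Y : ℝ → Matrix p n ℝ}
    {U' : Matrix l m ℝ} {S' : Matrix m n ℝ} {Y' : Matrix p n ℝ} {t : ℝ}
    (hU : ∀ i j, HasDerivAt (fun s => U s i j) (U' i j) t)
    (hS : ∀ i j, HasDerivAt (fun s => S s i j) (S' i j) t)
    (hY : ∀ i j, HasDerivAt (fun s => Y s i j) (Y' i j) t) (i : l) (k : p) :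
    HasDerivAt (fun s => (U s * S s * (Y s)ᵀ) i k)
      ((U' * S t * (Y t)ᵀ + U t * S' * (Y t)ᵀ + U t * S t * Y'ᵀ) i k) t := by
  have h := hasDerivAt_mul_apply (B := fun s => (Y s)ᵀ) (B' := Y'ᵀ)
    (hasDerivAt_mul_apply hU hS) (fun j k => hY k j) i k
  rwa [Matrix.add_mul] at h

end Matrix

section DBO

variable {n N r : Type*} [Fintype N] [Fintype r] [DecidableEq r]
  {U U' : Matrix n r ℝ} {S S' : Matrix r r ℝ} {Y Y' : Matrix N r ℝ} {W : Matrix N N ℝ}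

theorem dbo_derivative_mul_weight_mul (hY : Yᵀ * W * Y = 1) (hYg : Y'ᵀ * W * Y = 0) :
    (U' * S * Yᵀ + U * S' * Yᵀ + U * S * Y'ᵀ) * W * Y = U' * S + U * S' := by
  have hY' : Yᵀ * (W * Y) = 1 := by rw [← Matrix.mul_assoc, hY]
  have hYg' : Y'ᵀ * (W * Y) = 0 := by rw [← Matrix.mul_assoc, hYg]
  simp only [Matrix.add_mul, Matrix.mul_assoc, hY', hYg', Matrix.mul_one, Matrix.mul_zero,
    add_zero]

theorem dbo_projection_mul [Fintype n] [DecidableEq n] (hU : Uᵀ * U = 1) (hUg : Uᵀ * U' = 0) :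
    (1 - U * Uᵀ) * (U' * S + U * S') = U' * S :=
  calc (1 - U * Uᵀ) * (U' * S + U * S') = U' * S + U * S' - U * (Uᵀ * (U' * S + U * S')) := by
        rw [Matrix.sub_mul, Matrix.one_mul, Matrix.mul_assoc]
    _ = U' * S + U * S' - U * S' := by
        rw [Matrix.mul_add, ← Matrix.mul_assoc Uᵀ, ← Matrix.mul_assoc Uᵀ, hUg, hU,
          Matrix.zero_mul, Matrix.one_mul, zero_add]
    _ = U' * S := add_sub_cancel_right _ _

theorem dbo_spatial_eq [Fintype n] [DecidableEq n] (hU : Uᵀ * U = 1) (hY : Yᵀ * W * Y = 1)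
    (hUg : Uᵀ * U' = 0) (hYg : Y'ᵀ * W * Y = 0) (hS : IsUnit S.det) :
    U' = (1 - U * Uᵀ) * ((U' * S * Yᵀ + U * S' * Yᵀ + U * S * Y'ᵀ) * W * Y) * S⁻¹ := by
  rw [dbo_derivative_mul_weight_mul hY hYg, dbo_projection_mul hU hUg, Matrix.mul_assoc,
    mul_nonsing_inv _ hS, Matrix.mul_one]

end DBO

/-- Finite-dimensional DBO evolution of the spatial basis: under the DBO orthonormality
and dynamical orthogonality conditions, with `dA/dt = F` and `Σ` invertible, the spatial
basis evolves as `U̇ = (I − U Uᵀ) E[F Y] Σ⁻¹`. -/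
theorem dbo_spatial_evolution
    {n N r : ℕ} (w : Fin N → ℝ)
    (A F : ℝ → Matrix (Fin n) (Fin N) ℝ)
    (U U' : ℝ → Matrix (Fin n) (Fin r) ℝ)
    (S S' : ℝ → Matrix (Fin r) (Fin r) ℝ)
    (Y Y' : ℝ → Matrix (Fin N) (Fin r) ℝ)
    (hUd : ∀ t i j, HasDerivAt (fun s => U s i j) (U' t i j) t)
    (hSd : ∀ t i j, HasDerivAt (fun s => S s i j) (S' t i j) t)
    (hYd : ∀ t i j, HasDerivAt (fun s => Y s i j) (Y' t i j) t)
    (hA : ∀ t, A t = U t * S t * (Y t)ᵀ)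
    (hAd : ∀ t i j, HasDerivAt (fun s => A s i j) (F t i j) t)
    (hUorth : ∀ t, (U t)ᵀ * U t = 1)
    (hYorth : ∀ t, (Y t)ᵀ * Matrix.diagonal w * Y t = 1)
    (hUg : ∀ t, (U t)ᵀ * U' t = 0)
    (hYg : ∀ t, (Y' t)ᵀ * Matrix.diagonal w * Y t = 0)
    (hSinv : ∀ t, IsUnit (S t).det) :
    ∀ t, U' t = (1 - U t * (U t)ᵀ) * (F t * Matrix.diagonal w * Y t) * (S t)⁻¹ := by
  intro t
  have hF : F t = U' t * S t * (Y t)ᵀ + U t * S' t * (Y t)ᵀ + U t * S t * (Y' t)ᵀ := by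
    ext i j
    exact (hAd t i j).unique <| by
      simpa only [hA] using hasDerivAt_mul_mul_transpose_apply (hUd t) (hSd t) (hYd t) i j
  rw [hF]
  exact dbo_spatial_eq (hUorth t) (hYorth t) (hUg t) (hYg t) (hSinv t)
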